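/- Let d ≥ 1, let (u_i)_{i=1}^d and (v_i)_{i=1}^d be orthonormal bases of ℝ^d, let σ_1 ≥ σ_2 ≥ ⋯ ≥ σ_d ≥ 0 be real numbers, set A = Σ_{i=1}^d σ_i u_i v_i^⊤, let 1 ≤ r ≤ d with σ_r > 0, and set A_r^† = Σ_{i=1}^r σ_i^{-1} v_i u_i^⊤. Let 1 ≤ r° ≤ d, let (u°_j)_{j=1}^{r°} and (v°_j)_{j=1}^{r°} be orthonormal families in ℝ^d, let σ°_1 ≥ σ°_2 ≥ ⋯ ≥ σ°_d ≥ 0 with σ°_j > 0 for j ≤ r° and σ°_j = 0 for j > r°, let b° ∈ ℝ^d, and set θ° = Σ_{j=1}^{r°} (σ°_j)^{-1} (u°_j ⬝ b°) v°_j. Assume the discrete Picard condition with exponent p > 1: |u°_j ⬝ b°| ≤ (σ°_j)^p for all 1 ≤ j ≤ r°. Let A° be a d×d real matrix with A° θ° = b°, let b ∈ ℝ^d, and set θ_r = A_r^† b. Then ‖θ_r − θ°‖₂ ≤ (1/σ_r) ‖b − b°‖₂ + (d − r) (σ°_r)^{p−1} + (d − r) r° (σ°_1)^{p−1} + (1/σ_r)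 ‖A° − A‖ ‖θ°‖₂, where ‖A° − A‖ denotes the operator norm of A° − A with respect to the Euclidean norm. -/

import Mathlib

/-!
Write `A_r^†` for the truncated pseudo-inverse `truncPinv σ u v r`. Since `A° θ° = b°`,
`b = (b - b°) + (A° - A) θ° + A θ°`, and `A_r^† A` is the orthogonal projection `P_r`
onto `span {v_1, …, v_r}`, so `θ_r - θ°` splits into `A_r^† (b - b°)`, `A_r^† ((A° - A) θ°)`
and `P_r θ° - θ°`. By Bessel's inequality `A_r^†` has norm at most `1 / σ_r`, which bounds the
first two pieces. The last one is, up to sign, the sum of the `d - r` components of `θ°` along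
`v_{r+1}, …, v_d`, each at most `‖θ°‖`; and the Picard condition makes every summand of `θ°` at
most `(σ°_j)^(p-1) ≤ (σ°_1)^(p-1)` in norm, so `‖θ°‖ ≤ r° (σ°_1)^(p-1)`.
-/

open scoped RealInnerProductSpace BigOperators

open Finset Module

variable {E : Type*} [NormedAddCommGroup E] [InnerProductSpace ℝ E]

theorem orthonormal_of_inner_eq_ite {ι : Type*} [DecidableEq ι] {s t : Finset ι} {w : ι → E}
    (hw : ∀ i ∈ s, ∀ j ∈ s, ⟪w i, w j⟫ = if i = j then 1 else 0) (hts : t ⊆ s) :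
    Orthonormal ℝ fun i : t => w i := by
  rw [orthonormal_iff_ite]
  rintro ⟨i, hi⟩ ⟨j, hj⟩
  simp [hw i (hts hi) j (hts hj)]

theorem Orthonormal.sum_inner_smul_eq_self [FiniteDimensional ℝ E] {ι : Type*} [Fintype ι]
    {w : ι → E} (hw : Orthonormal ℝ w) (hcard : Fintype.card ι = finrank ℝ E) (x : E) :
    ∑ i, ⟪w i, x⟫ • w i = x := by
  have hspan := (hw.linearIndependent.span_eq_top_of_card_eq_finrank' hcard).ge
  simpa only [OrthonormalBasis.coe_mk] using (OrthonormalBasis.mk hw hspan).sum_repr' x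

theorem norm_sum_inner_smul_sub_le [FiniteDimensional ℝ E] {ι : Type*} [DecidableEq ι]
    {s t : Finset ι} {v : ι → E} (hv : Orthonormal ℝ fun i : s => v i) (hcard : #s = finrank ℝ E)
    (hts : t ⊆ s) (x : E) : ‖∑ i ∈ t, ⟪v i, x⟫ • v i - x‖ ≤ ((#s : ℝ) - #t) * ‖x‖ := by
  have hx : ∑ i ∈ s, ⟪v i, x⟫ • v i = x := by
    rw [← sum_coe_sort s]
    exact hv.sum_inner_smul_eq_self (by simpa using hcard) x
  have hcomp : ∀ i ∈ s, ‖⟪v i, x⟫ • v i‖ ≤ ‖x‖ := fun i hi => by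
    have hvi : ‖v i‖ = 1 := hv.1 ⟨i, hi⟩
    simpa [norm_smul, hvi] using abs_real_inner_le_norm (v i) x
  have hrest : x - ∑ i ∈ t, ⟪v i, x⟫ • v i = ∑ i ∈ s \ t, ⟪v i, x⟫ • v i := by
    rw [sub_eq_iff_eq_add, sum_sdiff hts, hx]
  calc ‖∑ i ∈ t, ⟪v i, x⟫ • v i - x‖ = ‖∑ i ∈ s \ t, ⟪v i, x⟫ • v i‖ := by
        rw [← norm_neg, neg_sub, hrest]
    _ ≤ ∑ _i ∈ s \ t, ‖x‖ :=
        (norm_sum_le _ _).trans (sum_le_sum fun i hi => hcomp i (mem_sdiff.1 hi).1)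
    _ = ((#s : ℝ) - #t) * ‖x‖ := by
        rw [sum_const, nsmul_eq_mul, card_sdiff_of_subset hts, Nat.cast_sub (card_le_card hts)]

theorem inv_mul_abs_le_rpow_sub_one {s a p : ℝ} (hs : 0 < s) (ha : |a| ≤ s ^ p) :
    s⁻¹ * |a| ≤ s ^ (p - 1) := by
  rw [Real.rpow_sub_one hs.ne', div_eq_inv_mul]
  exact mul_le_mul_of_nonneg_left ha (inv_nonneg.2 hs.le)

theorem norm_sum_inv_mul_smul_le_of_abs_le_rpow {ι : Type*} {s : Finset ι} {σ a : ι → ℝ}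
    {w : ι → E} {p M : ℝ} (hp : 1 ≤ p) (hw : ∀ i ∈ s, ‖w i‖ ≤ 1) (hσ : ∀ i ∈ s, 0 < σ i)
    (hσM : ∀ i ∈ s, σ i ≤ M) (ha : ∀ i ∈ s, |a i| ≤ σ i ^ p) :
    ‖∑ i ∈ s, ((σ i)⁻¹ * a i) • w i‖ ≤ #s * M ^ (p - 1) := by
  have hterm : ∀ i ∈ s, ‖((σ i)⁻¹ * a i) • w i‖ ≤ M ^ (p - 1) := fun i hi => by
    have hσi := hσ i hi
    calc ‖((σ i)⁻¹ * a i) • w i‖ ≤ (σ i)⁻¹ * |a i| * 1 := by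
          rw [norm_smul, Real.norm_eq_abs, abs_mul, abs_inv, abs_of_pos hσi]
          gcongr
          exact hw i hi
      _ ≤ σ i ^ (p - 1) := by simpa using inv_mul_abs_le_rpow_sub_one hσi (ha i hi)
      _ ≤ M ^ (p - 1) := Real.rpow_le_rpow hσi.le (hσM i hi) (by linarith)
  calc ‖∑ i ∈ s, ((σ i)⁻¹ * a i) • w i‖ ≤ ∑ _i ∈ s, M ^ (p - 1) :=
        (norm_sum_le _ _).trans (sum_le_sum hterm)
    _ = #s * M ^ (p - 1) := by rw [sum_const, nsmul_eq_mul]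

noncomputable def truncPinv (σ : ℕ → ℝ) (u v : ℕ → E) (r : ℕ) : E →L[ℝ] E :=
  ∑ i ∈ Icc 1 r, (σ i)⁻¹ • (innerSL ℝ (u i)).smulRight (v i)

theorem truncPinv_apply (σ : ℕ → ℝ) (u v : ℕ → E) (r : ℕ) (x : E) :
    truncPinv σ u v r x = ∑ i ∈ Icc 1 r, ((σ i)⁻¹ * ⟪u i, x⟫) • v i := by
  simp [truncPinv, mul_smul]

theorem norm_truncPinv_apply_le {σ : ℕ → ℝ} {u v : ℕ → E} {r : ℕ}
    (hu : Orthonormal ℝ fun i : Icc 1 r => u i) (hv : Orthonormal ℝ fun i : Icc 1 r => v i)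
    (hσr : 0 < σ r) (hσ : ∀ i ∈ Icc 1 r, σ r ≤ σ i) (x : E) :
    ‖truncPinv σ u v r x‖ ≤ (σ r)⁻¹ * ‖x‖ := by
  have hsq : ‖truncPinv σ u v r x‖ ^ 2 = ∑ i ∈ Icc 1 r, ((σ i)⁻¹ * ⟪u i, x⟫) ^ 2 := by
    rw [truncPinv_apply, ← real_inner_self_eq_norm_sq, ← sum_coe_sort (Icc 1 r),
      hv.inner_sum, ← sum_coe_sort (Icc 1 r)]
    simp [sq]
  have hbessel : ∑ i ∈ Icc 1 r, ⟪u i, x⟫ ^ 2 ≤ ‖x‖ ^ 2 := by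
    simpa [← sum_coe_sort (Icc 1 r)] using hu.sum_inner_products_le (s := univ) x
  refine le_of_pow_le_pow_left₀ two_ne_zero (by positivity) ?_
  calc ‖truncPinv σ u v r x‖ ^ 2 ≤ ∑ i ∈ Icc 1 r, ((σ r)⁻¹ * ⟪u i, x⟫) ^ 2 := by
        rw [hsq]
        refine sum_le_sum fun i hi => ?_
        rw [mul_pow, mul_pow]
        gcongr
        exacts [inv_nonneg.2 (hσr.trans_le (hσ i hi)).le, hσ i hi]
    _ ≤ ((σ r)⁻¹ * ‖x‖) ^ 2 := by
        simp_rw [mul_pow, ← mul_sum]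
        gcongr

theorem truncPinv_apply_apply {σ : ℕ → ℝ} {u v : ℕ → E} {n r : ℕ} {A : E →L[ℝ] E}
    (hu : Orthonormal ℝ fun i : Icc 1 n => u i)
    (hA : ∀ x, A x = ∑ i ∈ Icc 1 n, (σ i * ⟪v i, x⟫) • u i) (hrn : r ≤ n)
    (hσ : ∀ i ∈ Icc 1 r, σ i ≠ 0) (x : E) :
    truncPinv σ u v r (A x) = ∑ i ∈ Icc 1 r, ⟪v i, x⟫ • v i := by
  rw [truncPinv_apply]
  refine sum_congr rfl fun i hi => ?_
  have hin : i ∈ Icc 1 n := Icc_subset_Icc le_rfl hrn hi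
  have hcoef : ⟪u i, A x⟫ = σ i * ⟪v i, x⟫ := by
    rw [hA, ← sum_coe_sort (Icc 1 n)]
    exact hu.inner_right_fintype (fun j : Icc 1 n => σ j * ⟪v j, x⟫) ⟨i, hin⟩
  rw [hcoef, inv_mul_cancel_left₀ (hσ i hi)]

theorem stmt4_general (d : ℕ)
    (u v : ℕ → EuclideanSpace ℝ (Fin d))
    (hu : ∀ i ∈ Finset.Icc 1 d, ∀ j ∈ Finset.Icc 1 d,
      ⟪u i, u j⟫ = if i = j then 1 else 0)
    (hv : ∀ i ∈ Finset.Icc 1 d, ∀ j ∈ Finset.Icc 1 d,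
      ⟪v i, v j⟫ = if i = j then 1 else 0)
    (σ : ℕ → ℝ)
    (hσmono : ∀ i j, 1 ≤ i → i ≤ j → j ≤ d → σ j ≤ σ i)
    (r : ℕ) (hr1 : 1 ≤ r) (hrd : r ≤ d) (hσr : 0 < σ r)
    (r' : ℕ) (hr'd : r' ≤ d)
    (u' v' : ℕ → EuclideanSpace ℝ (Fin d))
    (hv' : ∀ i ∈ Finset.Icc 1 r', ∀ j ∈ Finset.Icc 1 r',
      ⟪v' i, v' j⟫ = if i = j then 1 else 0)
    (σ' : ℕ → ℝ)
    (hσ'mono : ∀ i j, 1 ≤ i → i ≤ j → j ≤ d → σ' j ≤ σ' i)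
    (hσ'pos : ∀ j, 1 ≤ j → j ≤ r' → 0 < σ' j)
    (hσ'zero : ∀ j, r' < j → j ≤ d → σ' j = 0)
    (b' : EuclideanSpace ℝ (Fin d))
    (θ' : EuclideanSpace ℝ (Fin d))
    (hθ' : θ' = ∑ j ∈ Finset.Icc 1 r', ((σ' j)⁻¹ * ⟪u' j, b'⟫) • v' j)
    (p : ℝ) (hp : 1 < p)
    (hPicard : ∀ j, 1 ≤ j → j ≤ r' → |⟪u' j, b'⟫| ≤ σ' j ^ p)
    (A : EuclideanSpace ℝ (Fin d) →L[ℝ] EuclideanSpace ℝ (Fin d))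
    (hA : ∀ x, A x = ∑ i ∈ Finset.Icc 1 d, (σ i * ⟪v i, x⟫) • u i)
    (A' : EuclideanSpace ℝ (Fin d) →L[ℝ] EuclideanSpace ℝ (Fin d))
    (hA'θ' : A' θ' = b')
    (b : EuclideanSpace ℝ (Fin d))
    (θr : EuclideanSpace ℝ (Fin d))
    (hθr : θr = ∑ i ∈ Finset.Icc 1 r, ((σ i)⁻¹ * ⟪u i, b⟫) • v i) :
    ‖θr - θ'‖ ≤ (1 / σ r) * ‖b - b'‖
      + ((d : ℝ) - r) * σ' r ^ (p - 1)
      + ((d : ℝ) - r) * r' * σ' 1 ^ (p - 1)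
      + (1 / σ r) * ‖A' - A‖ * ‖θ'‖ := by
  have hrsub : Icc 1 r ⊆ Icc 1 d := Icc_subset_Icc le_rfl hrd
  have hσge : ∀ i ∈ Icc 1 r, σ r ≤ σ i := fun i hi =>
    hσmono i r (mem_Icc.1 hi).1 (mem_Icc.1 hi).2 hrd
  have hvariance := norm_truncPinv_apply_le (orthonormal_of_inner_eq_ite hu hrsub)
    (orthonormal_of_inner_eq_ite hv hrsub) hσr hσge
  have hbias : ‖truncPinv σ u v r (A θ') - θ'‖ ≤ ((d : ℝ) - r) * ‖θ'‖ := by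
    rw [truncPinv_apply_apply (orthonormal_of_inner_eq_ite hu subset_rfl) hA hrd
      fun i hi => (hσr.trans_le (hσge i hi)).ne']
    simpa using norm_sum_inner_smul_sub_le (orthonormal_of_inner_eq_ite hv subset_rfl)
      (by simp) hrsub θ'
  have hθ'le : ‖θ'‖ ≤ r' * σ' 1 ^ (p - 1) := by
    have hv'1 := (orthonormal_of_inner_eq_ite hv' subset_rfl).1
    simpa [hθ'] using norm_sum_inv_mul_smul_le_of_abs_le_rpow hp.le
      (fun j hj => (hv'1 ⟨j, hj⟩).le) (fun j hj => hσ'pos j (mem_Icc.1 hj).1 (mem_Icc.1 hj).2)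
      (fun j hj => hσ'mono 1 j le_rfl (mem_Icc.1 hj).1 ((mem_Icc.1 hj).2.trans hr'd))
      (fun j hj => hPicard j (mem_Icc.1 hj).1 (mem_Icc.1 hj).2)
  have hsplit : θr - θ' = truncPinv σ u v r (b - b') + truncPinv σ u v r ((A' - A) θ')
      + (truncPinv σ u v r (A θ') - θ') := by
    rw [hθr, ← truncPinv_apply, ← add_sub_assoc, ← map_add, ← map_add,
      sub_apply, hA'θ', sub_add_sub_cancel, sub_add_cancel]
  have hσ'r : 0 ≤ σ' r := by
    rcases le_or_gt r r' with h | h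
    · exact (hσ'pos r hr1 h).le
    · exact (hσ'zero r h hrd).ge
  have hdr : (0 : ℝ) ≤ d - r := sub_nonneg.2 (by exact_mod_cast hrd)
  rw [hsplit, one_div]
  calc _ ≤ _ := norm_add₃_le
    _ ≤ (σ r)⁻¹ * ‖b - b'‖ + (σ r)⁻¹ * (‖A' - A‖ * ‖θ'‖) + ((d : ℝ) - r) * ‖θ'‖ := by
        gcongr
        · exact hvariance _
        · exact (hvariance _).trans (by gcongr; exact (A' - A).le_opNorm θ')
    _ ≤ _ := by
        have := mul_le_mul_of_nonneg_left hθ'le hdr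
        have := mul_nonneg hdr (Real.rpow_nonneg hσ'r (p - 1))
        nlinarith

/-- Linear-algebraic core of the bias–variance trade-off theorem:
with `θ_r = A_r^† b` and `θ°` the minimum-norm solution of the rank-`r°` reference
system `A° θ° = b°` satisfying the discrete Picard condition with exponent `p > 1`,
`‖θ_r − θ°‖ ≤ (1/σ_r) ‖b − b°‖ + (d − r)(σ°_r)^{p−1} + (d − r) r° (σ°_1)^{p−1}
  + (1/σ_r) ‖A° − A‖ ‖θ°‖`. -/
theorem stmt4 (d : ℕ) (hd : 1 ≤ d)
    (u v : ℕ → EuclideanSpace ℝ (Fin d))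
    (hu : ∀ i ∈ Finset.Icc 1 d, ∀ j ∈ Finset.Icc 1 d,
      ⟪u i, u j⟫ = if i = j then 1 else 0)
    (hv : ∀ i ∈ Finset.Icc 1 d, ∀ j ∈ Finset.Icc 1 d,
      ⟪v i, v j⟫ = if i = j then 1 else 0)
    (σ : ℕ → ℝ)
    (hσmono : ∀ i j, 1 ≤ i → i ≤ j → j ≤ d → σ j ≤ σ i)
    (hσnonneg : ∀ i, 1 ≤ i → i ≤ d → 0 ≤ σ i)
    (r : ℕ) (hr1 : 1 ≤ r) (hrd : r ≤ d) (hσr : 0 < σ r)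
    (r' : ℕ) (hr'1 : 1 ≤ r') (hr'd : r' ≤ d)
    (u' v' : ℕ → EuclideanSpace ℝ (Fin d))
    (hu' : ∀ i ∈ Finset.Icc 1 r', ∀ j ∈ Finset.Icc 1 r',
      ⟪u' i, u' j⟫ = if i = j then 1 else 0)
    (hv' : ∀ i ∈ Finset.Icc 1 r', ∀ j ∈ Finset.Icc 1 r',
      ⟪v' i, v' j⟫ = if i = j then 1 else 0)
    (σ' : ℕ → ℝ)
    (hσ'mono : ∀ i j, 1 ≤ i → i ≤ j → j ≤ d → σ' j ≤ σ' i)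
    (hσ'pos : ∀ j, 1 ≤ j → j ≤ r' → 0 < σ' j)
    (hσ'zero : ∀ j, r' < j → j ≤ d → σ' j = 0)
    (b' : EuclideanSpace ℝ (Fin d))
    (θ' : EuclideanSpace ℝ (Fin d))
    (hθ' : θ' = ∑ j ∈ Finset.Icc 1 r', ((σ' j)⁻¹ * ⟪u' j, b'⟫) • v' j)
    (p : ℝ) (hp : 1 < p)
    (hPicard : ∀ j, 1 ≤ j → j ≤ r' → |⟪u' j, b'⟫| ≤ σ' j ^ p)
    (A : EuclideanSpace ℝ (Fin d) →L[ℝ] EuclideanSpace ℝ (Fin d))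
    (hA : ∀ x, A x = ∑ i ∈ Finset.Icc 1 d, (σ i * ⟪v i, x⟫) • u i)
    (A' : EuclideanSpace ℝ (Fin d) →L[ℝ] EuclideanSpace ℝ (Fin d))
    (hA'θ' : A' θ' = b')
    (b : EuclideanSpace ℝ (Fin d))
    (θr : EuclideanSpace ℝ (Fin d))
    (hθr : θr = ∑ i ∈ Finset.Icc 1 r, ((σ i)⁻¹ * ⟪u i, b⟫) • v i) :
    ‖θr - θ'‖ ≤ (1 / σ r) * ‖b - b'‖
      + ((d : ℝ) - r) * σ' r ^ (p - 1)
      + ((d : ℝ) - r) * r' * σ' 1 ^ (p - 1)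
      + (1 / σ r) * ‖A' - A‖ * ‖θ'‖ :=
  stmt4_general d u v hu hv σ hσmono r hr1 hrd hσr r' hr'd u' v' hv' σ' hσ'mono hσ'pos hσ'zero b' θ'
    hθ' p hp hPicard A hA A' hA'θ' b θr hθr
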